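/- For complex numbers ξ_1,...,ξ_N with all relevant denominators nonzero, ∑_{σ∈S_N} sgn(σ) · 1/[(1-ξ_{σ(2)})(1-ξ_{σ(3)})^2 ⋯ (1-ξ_{σ(N)})^{N-1}] · (ξ_{σ(2)} ξ_{σ(3)}^2 ⋯ ξ_{σ(N)}^{N-1}) / [(1-ξ_{σ(2)}⋯ξ_{σ(N)})(1-ξ_{σ(3)}⋯ξ_{σ(N)})⋯(1-ξ_{σ(N)})] = (1 - ξ_1 ξ_2 ⋯ ξ_N) · ∏_{i=1}^N 1/(1-ξ_i)^N · ∏_{1≤i<j≤N}(ξ_j-ξ_i), for N ≥ 2. -/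

import Mathlib

/-!
Multiplying the summand by `∏ᵢ (1 - ξᵢ)^N` turns it into
`s(v) = ∏ⱼ vⱼ^j (1 - vⱼ)^(N-j) / ∏_{k ≥ 1} (1 - v_k ⋯ v_{N-1})` at `v = ξ ∘ σ`, and the claim into
`∑_σ sgn σ · s(ξ ∘ σ) = (1 - ∏ ξ) · V(ξ)` with `V` the Vandermonde determinant. Splitting off
`p = σ 0` factors `s(ξ ∘ σ)` as `(1 - ξ_p)^N · P_p / (1 - P_p) · s(η_p ∘ τ)`, where `η_p` lists the
remaining entries and `P_p = ∏ η_p`. By induction the sum over `τ` is `(1 - P_p) · V(η_p)`, which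
cancels the denominator, and `V(η_p) = ±V(ξ) / ∏_{a ≠ p} (ξ_a - ξ_p)`. What remains is
`∑_p (1 - ξ_p)^N ∏_{a ≠ p} ξ_a / (ξ_a - ξ_p) = 1 - ∏ ξ`, Lagrange interpolation at `0` of
`(X - 1)^N - ∏_a (X - ξ_a)`, a polynomial of degree `< N`.
If two `ξᵢ` coincide, both sides vanish because the left side is alternating in `ξ`.
-/

open Finset Matrix Polynomial Equiv

theorem Equiv.Perm.sum_fin_succ {M : Type*} [AddCommMonoid M] {n : ℕ}
    (f : Perm (Fin (n + 1)) → M) :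
    ∑ σ, f σ = ∑ p, ∑ τ, f (Perm.decomposeFin.symm (p, τ)) := by
  rw [← Fintype.sum_prod_type']
  exact (Fintype.sum_equiv Perm.decomposeFin.symm _ _ fun _ => rfl).symm

theorem Equiv.Perm.sign_decomposeFin_symm {n : ℕ} (p : Fin (n + 1)) (τ : Perm (Fin n)) :
    Perm.sign (Perm.decomposeFin.symm (p, τ)) = Perm.sign (swap 0 p) * Perm.sign τ := by
  rw [Perm.decomposeFin.symm_sign, ← Perm.decomposeFin_symm_of_one, Perm.decomposeFin.symm_sign,
    Perm.sign_one, mul_one]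

theorem Equiv.Perm.intCast_sign_mul_self {ι R : Type*} [Fintype ι] [DecidableEq ι] [Ring R]
    (σ : Perm ι) : ((Perm.sign σ : ℤ) : R) * ((Perm.sign σ : ℤ) : R) = 1 := by
  rw [← Int.cast_mul, ← Units.val_mul, Int.units_mul_self, Units.val_one, Int.cast_one]

theorem sum_sign_mul_comp_eq_zero_of_not_injective {ι α R : Type*} [Fintype ι] [DecidableEq ι]
    [CommRing R] (g : (ι → α) → R) {ξ : ι → α} (hξ : ¬ Function.Injective ξ) :
    ∑ σ : Perm ι, ((Perm.sign σ : ℤ) : R) * g (ξ ∘ σ) = 0 := by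
  obtain ⟨i, j, hij, hne⟩ := Function.not_injective_iff.1 hξ
  have hcomp : ∀ σ : Perm ι, ξ ∘ ⇑(swap i j * σ) = ξ ∘ σ := fun σ =>
    funext fun _ => apply_swap_eq_self hij _
  exact sum_involution (fun σ _ => swap i j * σ)
    (fun σ _ => by rw [hcomp, Perm.sign_mul, Perm.sign_swap hne]; push_cast; ring)
    (fun σ _ _ => (not_congr swap_mul_eq_iff).mpr hne) (fun _ _ => mem_univ _)
    (fun σ _ => swap_mul_involutive i j σ)

theorem Fin.prod_swap_zero_succ {M : Type*} [CommMonoid M] {n : ℕ} (f : Fin (n + 1) → M)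
    (p : Fin (n + 1)) : ∏ m : Fin n, f (swap 0 p m.succ) = ∏ a ∈ univ.erase p, f a := by
  rw [← Fin.prod_Ioi_zero (fun b => f (swap 0 p b))]
  refine prod_equiv (swap 0 p) (fun b => ?_) (fun _ _ => rfl)
  simp [swap_apply_eq_iff]

section Vandermonde

variable {R : Type*} [CommRing R] {n : ℕ}

theorem Matrix.det_vandermonde_comp_perm (v : Fin n → R) (σ : Perm (Fin n)) :
    (vandermonde (v ∘ σ)).det = ((Perm.sign σ : ℤ) : R) * (vandermonde v).det :=
  det_permute σ (vandermonde v)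

theorem Matrix.det_vandermonde_succ (v : Fin (n + 1) → R) :
    (vandermonde v).det = (∏ m : Fin n, (v m.succ - v 0)) * (vandermonde (v ∘ Fin.succ)).det := by
  simp only [det_vandermonde, Fin.prod_univ_succ, Fin.prod_Ioi_zero, Fin.prod_Ioi_succ,
    Function.comp_apply]

theorem prod_filter_lt_sub_eq_det_vandermonde (v : Fin n → R) :
    ∏ p ∈ univ.filter (fun p : Fin n × Fin n => p.1 < p.2), (v p.2 - v p.1) =
      (vandermonde v).det := by
  rw [det_vandermonde, prod_filter, Fintype.prod_prod_type]
  simp_rw [← prod_filter, filter_lt_eq_Ioi]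

end Vandermonde

section Lagrange

variable {ι K : Type*} [DecidableEq ι] [Field K] {s : Finset ι} {v : ι → K}

theorem Lagrange.eval_zero_basis (i : ι) :
    (Lagrange.basis s v i).eval 0 = ∏ j ∈ s.erase i, v j / (v j - v i) := by
  rw [Lagrange.basis, eval_prod]
  refine prod_congr rfl fun j _ => ?_
  rw [Lagrange.basisDivisor, eval_mul, eval_C, eval_sub, eval_X, eval_C, ← neg_sub (v j), inv_neg]
  ring

theorem sum_one_sub_pow_mul_prod_div (hvs : Set.InjOn v s) :
    ∑ i ∈ s, (1 - v i) ^ #s * ∏ j ∈ s.erase i, v j / (v j - v i) = 1 - ∏ i ∈ s, v i := by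
  -- `nodal s 1 = (X - 1) ^ #s`, so `f` is a difference of two monic polynomials of degree `#s`
  set f : K[X] := Lagrange.nodal s 1 - Lagrange.nodal s v
  have hdeg : f.degree < #s := by
    rw [← Lagrange.degree_nodal (v := v)]
    refine degree_sub_lt_right ?_ Lagrange.nodal_ne_zero ?_
    · rw [Lagrange.degree_nodal, Lagrange.degree_nodal]
    · rw [Lagrange.nodal_monic.leadingCoeff, Lagrange.nodal_monic.leadingCoeff]
  have hinterp := congrArg (eval 0) (Lagrange.eq_interpolate hvs hdeg)
  simp only [Lagrange.interpolate_apply, eval_finsetSum, eval_mul, eval_C,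
    Lagrange.eval_zero_basis, f, eval_sub, Lagrange.eval_nodal] at hinterp
  have hnode : ∀ x ∈ s, ∏ i ∈ s, (v x - v i) = 0 := fun x hx => prod_eq_zero hx (sub_self _)
  rw [sum_congr rfl fun x hx => by rw [hnode x hx, sub_zero]] at hinterp
  simp only [Pi.one_apply, zero_sub, prod_neg, prod_const, ← neg_sub (1 : K), mul_assoc,
    ← mul_sum, sub_zero, one_pow, mul_one] at hinterp
  refine mul_left_cancel₀ (pow_ne_zero #s (neg_ne_zero.2 one_ne_zero)) ?_
  rw [← hinterp, mul_sub, mul_one]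

end Lagrange

namespace TracyWidom

section SwapTail

variable {α : Type*} {n : ℕ}

/-- `ξ` with the entry `ξ p` removed and `ξ 0` moved into its slot: the order in which
`Equiv.Perm.decomposeFin` lists the remaining values. -/
def swapTail (ξ : Fin (n + 1) → α) (p : Fin (n + 1)) : Fin n → α := fun m => ξ (swap 0 p m.succ)

theorem swapTail_injective {ξ : Fin (n + 1) → α} (hξ : Function.Injective ξ) (p : Fin (n + 1)) :
    Function.Injective (swapTail ξ p) :=
  fun _ _ h => Fin.succ_injective _ ((swap 0 p).injective (hξ h))

theorem comp_decomposeFin_symm_comp_succ (ξ : Fin (n + 2) → α) (p : Fin (n + 2))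
    (τ : Perm (Fin (n + 1))) :
    (ξ ∘ Perm.decomposeFin.symm (p, τ)) ∘ Fin.succ = swapTail ξ p ∘ τ := by
  funext m
  simp [swapTail]

end SwapTail

variable {K : Type*} [Field K] {n : ℕ}

def tailProd (v : Fin n → K) (k : Fin n) : K := ∏ m, if k ≤ m then v m else 1

def tailDenom (v : Fin n → K) : K := ∏ k : Fin n, if k.val = 0 then 1 else 1 - tailProd v k

def scaledNum (v : Fin n → K) : K := ∏ j : Fin n, v j ^ (j : ℕ) * (1 - v j) ^ (n - j)

def scaledTerm (v : Fin n → K) : K := scaledNum v / tailDenom v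

theorem tailProd_zero (v : Fin (n + 1) → K) : tailProd v 0 = ∏ m, v m := by
  simp [tailProd]

theorem tailProd_succ (v : Fin (n + 1) → K) (k : Fin n) :
    tailProd v k.succ = tailProd (v ∘ Fin.succ) k := by
  simp [tailProd, Fin.prod_univ_succ]

theorem tailDenom_eq_prod (v : Fin (n + 1) → K) :
    tailDenom v = ∏ k : Fin n, (1 - tailProd v k.succ) := by
  simp [tailDenom, Fin.prod_univ_succ]

theorem tailDenom_succ_succ (v : Fin (n + 2) → K) :
    tailDenom v = (1 - ∏ m : Fin (n + 1), v m.succ) * tailDenom (v ∘ Fin.succ) := by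
  rw [tailDenom_eq_prod, tailDenom_eq_prod, Fin.prod_univ_succ]
  simp only [tailProd_succ, tailProd_zero, Function.comp_apply]

theorem scaledNum_succ (v : Fin (n + 1) → K) :
    scaledNum v = (1 - v 0) ^ (n + 1) * (∏ m : Fin n, v m.succ) * scaledNum (v ∘ Fin.succ) := by
  simp only [scaledNum, Fin.prod_univ_succ, Fin.val_zero, Fin.val_succ, pow_zero, one_mul,
    Nat.sub_zero, Nat.add_sub_add_right, pow_succ, Function.comp_apply, prod_mul_distrib]
  ring

theorem scaledTerm_succ_succ (v : Fin (n + 2) → K) :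
    scaledTerm v = (1 - v 0) ^ (n + 2) *
      ((∏ m : Fin (n + 1), v m.succ) / (1 - ∏ m : Fin (n + 1), v m.succ)) *
        scaledTerm (v ∘ Fin.succ) := by
  simp only [scaledTerm, scaledNum_succ, tailDenom_succ_succ, div_eq_mul_inv, mul_inv]
  ring

theorem sign_mul_scaledTerm_comp_decomposeFin_symm (ξ : Fin (n + 2) → K) (p : Fin (n + 2))
    (τ : Perm (Fin (n + 1))) :
    ((Perm.sign (Perm.decomposeFin.symm (p, τ)) : ℤ) : K) *
        scaledTerm (ξ ∘ Perm.decomposeFin.symm (p, τ)) =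
      ((Perm.sign (swap 0 p) : ℤ) : K) * (1 - ξ p) ^ (n + 2) *
          ((∏ m, swapTail ξ p m) / (1 - ∏ m, swapTail ξ p m)) *
        (((Perm.sign τ : ℤ) : K) * scaledTerm (swapTail ξ p ∘ τ)) := by
  have hprod : ∏ m : Fin (n + 1), (ξ ∘ Perm.decomposeFin.symm (p, τ)) m.succ =
      ∏ m, swapTail ξ p m := by
    rw [← Equiv.prod_comp τ (swapTail ξ p)]
    exact congrArg (fun f => ∏ m, f m) (comp_decomposeFin_symm_comp_succ ξ p τ)
  rw [scaledTerm_succ_succ, hprod, comp_decomposeFin_symm_comp_succ, Perm.sign_decomposeFin_symm]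
  simp only [Function.comp_apply, Perm.decomposeFin_symm_apply_zero, Units.val_mul, Int.cast_mul]
  ring

theorem sum_sign_swap_mul_prod_mul_det_vandermonde_swapTail (ξ : Fin (n + 1) → K)
    (hξ : Function.Injective ξ) :
    ∑ p, ((Perm.sign (swap 0 p) : ℤ) : K) * (1 - ξ p) ^ (n + 1) *
        ((∏ m, swapTail ξ p m) * (vandermonde (swapTail ξ p)).det) =
      (1 - ∏ i, ξ i) * (vandermonde ξ).det := by
  have hterm : ∀ p, ((Perm.sign (swap 0 p) : ℤ) : K) * (1 - ξ p) ^ (n + 1) *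
      ((∏ m, swapTail ξ p m) * (vandermonde (swapTail ξ p)).det) =
      (1 - ξ p) ^ (n + 1) * (∏ a ∈ univ.erase p, ξ a / (ξ a - ξ p)) * (vandermonde ξ).det := by
    intro p
    set s := ((Perm.sign (swap 0 p) : ℤ) : K)
    set D := ∏ m, (swapTail ξ p m - ξ p)
    have hD : D ≠ 0 := prod_ne_zero_iff.2 fun m _ => sub_ne_zero.2 fun h =>
      Fin.succ_ne_zero m ((swap 0 p).injective ((hξ h).trans (swap_apply_left 0 p).symm))
    have hdet : s * (vandermonde ξ).det = D * (vandermonde (swapTail ξ p)).det := by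
      rw [← det_vandermonde_comp_perm, det_vandermonde_succ]
      simp only [Function.comp_apply, swap_apply_left]
      rfl
    have hreindex : ∏ a ∈ univ.erase p, ξ a / (ξ a - ξ p) = (∏ m, swapTail ξ p m) / D := by
      rw [← Fin.prod_swap_zero_succ (fun a => ξ a / (ξ a - ξ p)), prod_div_distrib]
      rfl
    rw [hreindex, eq_div_of_mul_eq hD ((mul_comm _ _).trans hdet.symm)]
    linear_combination ((1 - ξ p) ^ (n + 1) * (∏ m, swapTail ξ p m) * (vandermonde ξ).det / D) *
      Perm.intCast_sign_mul_self (R := K) (swap 0 p)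
  have hlagrange := sum_one_sub_pow_mul_prod_div (s := univ) hξ.injOn
  rw [card_univ, Fintype.card_fin] at hlagrange
  rw [sum_congr rfl fun p _ => hterm p, ← sum_mul, hlagrange]

theorem sum_sign_mul_scaledTerm_comp (ξ : Fin (n + 1) → K) (hξ : Function.Injective ξ)
    (htail : ∀ (σ : Perm (Fin (n + 1))) (k : Fin (n + 1)), k.val ≠ 0 → tailProd (ξ ∘ σ) k ≠ 1) :
    ∑ σ : Perm (Fin (n + 1)), ((Perm.sign σ : ℤ) : K) * scaledTerm (ξ ∘ σ) =
      (1 - ∏ i, ξ i) * (vandermonde ξ).det := by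
  induction n with
  | zero => simp [scaledTerm, scaledNum, tailDenom]
  | succ n ih =>
    have htail' : ∀ p (τ : Perm (Fin (n + 1))) (k : Fin (n + 1)),
        tailProd (swapTail ξ p ∘ τ) k ≠ 1 := by
      intro p τ k
      rw [← comp_decomposeFin_symm_comp_succ, ← tailProd_succ]
      exact htail _ k.succ (by simp)
    have hinner : ∀ p, ∑ τ : Perm (Fin (n + 1)),
        ((Perm.sign τ : ℤ) : K) * scaledTerm (swapTail ξ p ∘ τ) =
          (1 - ∏ m, swapTail ξ p m) * (vandermonde (swapTail ξ p)).det :=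
      fun p => ih (swapTail ξ p) (swapTail_injective hξ p) fun τ k _ => htail' p τ k
    have hne : ∀ p, 1 - ∏ m, swapTail ξ p m ≠ 0 := fun p => by
      have h := htail' p 1 0
      rw [tailProd_zero, Perm.coe_one, Function.comp_id] at h
      exact sub_ne_zero.2 (Ne.symm h)
    calc _ = ∑ p, ∑ τ : Perm (Fin (n + 1)),
            ((Perm.sign (Perm.decomposeFin.symm (p, τ)) : ℤ) : K) *
              scaledTerm (ξ ∘ Perm.decomposeFin.symm (p, τ)) :=
          Perm.sum_fin_succ fun σ => ((Perm.sign σ : ℤ) : K) * scaledTerm (ξ ∘ σ)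
      _ = ∑ p, ((Perm.sign (swap 0 p) : ℤ) : K) * (1 - ξ p) ^ (n + 2) *
            ((∏ m, swapTail ξ p m) * (vandermonde (swapTail ξ p)).det) := by
        refine sum_congr rfl fun p _ => ?_
        simp_rw [sign_mul_scaledTerm_comp_decomposeFin_symm, ← mul_sum, hinner]
        linear_combination (((Perm.sign (swap 0 p) : ℤ) : K) * (1 - ξ p) ^ (n + 2) *
          (vandermonde (swapTail ξ p)).det) * div_mul_cancel₀ (∏ m, swapTail ξ p m) (hne p)
      _ = _ := sum_sign_swap_mul_prod_mul_det_vandermonde_swapTail ξ hξ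

theorem sign_mul_prod_pow_div_eq_inv_mul_scaledTerm (ξ : Fin n → K) (hξ : ∀ i, ξ i ≠ 1)
    (σ : Perm (Fin n)) :
    ((Perm.sign σ : ℤ) : K) * ((∏ j, ξ (σ j) ^ (j : ℕ)) /
        ((∏ j, (1 - ξ (σ j)) ^ (j : ℕ)) * tailDenom (ξ ∘ σ))) =
      (∏ i, (1 - ξ i) ^ n)⁻¹ * (((Perm.sign σ : ℤ) : K) * scaledTerm (ξ ∘ σ)) := by
  have hsplit : ∏ i, (1 - ξ i) ^ n =
      (∏ j, (1 - ξ (σ j)) ^ (j : ℕ)) * ∏ j, (1 - ξ (σ j)) ^ (n - j) := by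
    rw [← prod_mul_distrib, ← Equiv.prod_comp σ (fun i => (1 - ξ i) ^ n)]
    refine prod_congr rfl fun j _ => ?_
    rw [← pow_add, Nat.add_sub_cancel' j.is_le']
  have hE : ∏ j, (1 - ξ (σ j)) ^ (n - j) ≠ 0 :=
    prod_ne_zero_iff.2 fun j _ => pow_ne_zero _ (sub_ne_zero.2 (hξ (σ j)).symm)
  simp only [scaledTerm, scaledNum, Function.comp_apply]
  rw [prod_mul_distrib, hsplit, mul_left_comm, inv_mul_eq_div, div_div,
    mul_comm (tailDenom _), mul_right_comm _ _ (tailDenom _), mul_div_mul_right _ _ hE]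

end TracyWidom

open TracyWidom in
theorem stmt3 (N : ℕ) (hN : 2 ≤ N) (ξ : Fin N → ℂ)
    (hne : ∀ i, ξ i ≠ 1)
    (hprod : ∀ (σ : Equiv.Perm (Fin N)) (k : Fin N), k.val ≠ 0 →
      (∏ m : Fin N, if k ≤ m then ξ (σ m) else 1) ≠ 1) :
    ∑ σ : Equiv.Perm (Fin N),
      ((Equiv.Perm.sign σ : ℤ) : ℂ) *
        ((∏ j : Fin N, ξ (σ j) ^ j.val) /
          ((∏ j : Fin N, (1 - ξ (σ j)) ^ j.val) *
            ∏ k : Fin N, (if k.val = 0 then 1 else 1 - ∏ m : Fin N, (if k ≤ m then ξ (σ m) else 1)))) =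
      (1 - ∏ i : Fin N, ξ i) * (∏ i : Fin N, (1 / (1 - ξ i) ^ N)) *
        ∏ p ∈ Finset.univ.filter (fun p : Fin N × Fin N => p.1 < p.2), (ξ p.2 - ξ p.1) := by
  obtain ⟨n, rfl⟩ : ∃ n, N = n + 1 := ⟨N - 1, by omega⟩
  rw [prod_filter_lt_sub_eq_det_vandermonde]
  by_cases hξ : Function.Injective ξ
  · refine (sum_congr rfl fun σ _ => sign_mul_prod_pow_div_eq_inv_mul_scaledTerm ξ hne σ).trans ?_
    rw [← mul_sum, sum_sign_mul_scaledTerm_comp ξ hξ hprod]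
    simp only [one_div, prod_inv_distrib]
    ring
  · rw [det_vandermonde_eq_zero_iff.2 (Function.not_injective_iff.1 hξ), mul_zero]
    exact sum_sign_mul_comp_eq_zero_of_not_injective
      (fun v => (∏ j, v j ^ j.val) / ((∏ j, (1 - v j) ^ j.val) * tailDenom v)) hξ
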